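/- Let φ_n be the linear map on symmetric functions defined by φ_n(f) = ∑_{ν ⊢ n} f(Ξ_ν) p_ν / z_ν, where f(Ξ_ν) is the evaluation of f at the multiset of eigenvalues of a permutation matrix of cycle type ν. Then for all symmetric functions f and g, φ_n(fg) = φ_n(f) ∗ φ_n(g), where ∗ denotes the Kronecker (internal) product on symmetric functions. -/

import Mathlib

open scoped BigOperators
noncomputable section

/-- The ring of symmetric functions, presented as `ℚ[p₁, p₂, p₃, …]`,
with the variable `X k` representing the power sum `p_k` (the variable `X 0` is unused). -/
abbrev SymFn := MvPolynomial ℕ ℚ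

/-- The power sum symmetric function `p_k`. -/
def pGen (k : ℕ) : SymFn := MvPolynomial.X k

/-- `p_λ` for a multiset of parts. -/
def pMul (m : Multiset ℕ) : SymFn := (m.map pGen).prod

/-- `p_λ` for a partition `λ`. -/
def pPart {n : ℕ} (lam : n.Partition) : SymFn := pMul lam.parts

/-- `z_λ = ∏_i i^{m_i(λ)} m_i(λ)!`. -/
def zed {n : ℕ} (lam : n.Partition) : ℚ :=
  ∏ i ∈ Finset.range (n + 1),
    (i : ℚ) ^ (lam.parts.count i) * (Nat.factorial (lam.parts.count i))

/-- `z` of a monomial in the `p`-generators. -/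
def zMon (m : ℕ →₀ ℕ) : ℚ :=
  ∏ i ∈ m.support, (i : ℚ) ^ (m i) * (Nat.factorial (m i))

/-- The Hall scalar product, determined by `⟨p_λ, p_μ⟩ = z_λ δ_{λμ}`. -/
def hall (f g : SymFn) : ℚ :=
  ∑ m ∈ f.support, MvPolynomial.coeff m f * MvPolynomial.coeff m g * zMon m

/-- The complete homogeneous symmetric function `h_m = ∑_{λ ⊢ m} p_λ / z_λ`. -/
def hFn (m : ℕ) : SymFn := ∑ lam : m.Partition, (zed lam)⁻¹ • pPart lam

/-- `h_k` for an integer index, vanishing for negative `k`. -/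
def hInt (k : ℤ) : SymFn := if 0 ≤ k then hFn k.toNat else 0

/-- The Schur function of a (finite, weakly decreasing) list of row lengths,
via the Jacobi–Trudi determinant `s_λ = det(h_{λ_i - i + j})`. -/
def schurList (l : List ℕ) : SymFn :=
  Matrix.det (Matrix.of fun i j : Fin l.length =>
    hInt ((l.get i : ℤ) - (i : ℤ) + (j : ℤ)))

/-- The parts of a partition, sorted in weakly decreasing order. -/
def partList {n : ℕ} (lam : n.Partition) : List ℕ := (lam.parts.sort (· ≤ ·)).reverse

/-- The Schur function `s_λ`. -/
def schur {n : ℕ} (lam : n.Partition) : SymFn := schurList (partList lam)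

/-- Evaluation `f(Ξ_ν)` of a symmetric function at the eigenvalues of a permutation
matrix of cycle type `ν`: the power sum `p_k` evaluates to `∑_{j ∈ ν, j ∣ k} j`. -/
def xiEval {n : ℕ} (nu : n.Partition) (f : SymFn) : ℚ :=
  MvPolynomial.eval (fun k => ((nu.parts.filter (fun j => j ∣ k)).sum : ℚ)) f

/-- The character scalar product `⟨f, g⟩_@ = ∑_{ν ⊢ n} f(Ξ_ν) g(Ξ_ν) / z_ν`. -/
def atProd (n : ℕ) (f g : SymFn) : ℚ :=
  ∑ nu : n.Partition, xiEval nu f * xiEval nu g / zed nu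

/-- The Frobenius-type map `φ_n(f) = ∑_{ν ⊢ n} f(Ξ_ν) p_ν / z_ν`. -/
def phi (n : ℕ) (f : SymFn) : SymFn :=
  ∑ nu : n.Partition, (xiEval nu f / zed nu) • pPart nu

/-- The Kronecker (internal) product, determined by
`(p_λ/z_λ) ∗ (p_μ/z_μ) = δ_{λμ} p_λ/z_λ`. -/
def kron (f g : SymFn) : SymFn :=
  ∑ m ∈ f.support,
    MvPolynomial.monomial m (MvPolynomial.coeff m f * MvPolynomial.coeff m g * zMon m)

end

/-! On `ℚ[p₁, p₂, …]` the Kronecker product multiplies coefficients of the `p`-basis pointwise,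
weighted by `z`, while `φ_n f` has coefficient `f(Ξ_ν) / z_ν` at `p_ν` and no others. Since
`f ↦ f(Ξ_ν)` is a ring homomorphism, both sides of `φ_n(fg) = φ_n(f) ∗ φ_n(g)` have coefficient
`f(Ξ_ν) g(Ξ_ν) / z_ν` at `p_ν`. -/

open MvPolynomial

theorem pMul_eq_monomial (s : Multiset ℕ) : pMul s = monomial (Multiset.toFinsupp s) 1 := by
  induction s using Multiset.induction with
  | empty => simp [pMul]
  | cons a s ih =>
    rw [← Multiset.singleton_add, Multiset.toFinsupp_add, Multiset.toFinsupp_singleton,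
      ← one_mul (1 : ℚ), ← monomial_mul, ← ih]
    simp [pMul, pGen, X]

theorem coeff_kron (f g : SymFn) (m : ℕ →₀ ℕ) :
    coeff m (kron f g) = coeff m f * coeff m g * zMon m := by
  rw [kron, coeff_sum]
  by_cases hm : m ∈ f.support
  · rw [Finset.sum_eq_single_of_mem m hm fun m' _ hne => by rw [coeff_monomial, if_neg hne],
      coeff_monomial, if_pos rfl]
  · rw [notMem_support_iff.mp hm, zero_mul, zero_mul]
    exact Finset.sum_eq_zero fun m' hm' => by
      rw [coeff_monomial, if_neg (ne_of_mem_of_not_mem hm' hm)]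

theorem xiEval_mul {n : ℕ} (nu : n.Partition) (f g : SymFn) :
    xiEval nu (f * g) = xiEval nu f * xiEval nu g :=
  map_mul _ f g

namespace Nat.Partition

variable {n : ℕ} (nu : n.Partition)

theorem zMon_toFinsupp_parts : zMon (Multiset.toFinsupp nu.parts) = zed nu := by
  refine Finset.prod_subset (fun i hi => ?_) fun i _ hi => ?_
  · rw [Multiset.toFinsupp_support, Multiset.mem_toFinset] at hi
    exact Finset.mem_range_succ_iff.mpr (nu.parts_sum ▸ Multiset.le_sum_of_mem hi)
  · rw [Finsupp.notMem_support_iff.mp hi, pow_zero, Nat.factorial_zero, Nat.cast_one, one_mul]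

theorem zed_ne_zero : zed nu ≠ 0 := by
  refine Finset.prod_ne_zero_iff.mpr fun i _ => mul_ne_zero ?_ (by positivity)
  rcases Nat.eq_zero_or_pos i with rfl | hi
  · rw [Multiset.count_eq_zero.mpr fun h => (nu.parts_pos h).false, pow_zero]
    exact one_ne_zero
  · positivity

end Nat.Partition

theorem phi_eq_sum_monomial (n : ℕ) (f : SymFn) :
    phi n f = ∑ nu : n.Partition,
      monomial (Multiset.toFinsupp nu.parts) (xiEval nu f / zed nu) := by
  refine Finset.sum_congr rfl fun nu _ => ?_
  rw [pPart, pMul_eq_monomial, smul_monomial, smul_eq_mul, mul_one]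

theorem coeff_phi_toFinsupp_parts {n : ℕ} (f : SymFn) (mu : n.Partition) :
    coeff (Multiset.toFinsupp mu.parts) (phi n f) = xiEval mu f / zed mu := by
  rw [phi_eq_sum_monomial, coeff_sum, Finset.sum_eq_single_of_mem mu (Finset.mem_univ mu),
    coeff_monomial, if_pos rfl]
  intro nu _ hne
  rw [coeff_monomial, if_neg fun h => hne (Nat.Partition.ext (Multiset.toFinsupp.injective h))]

theorem coeff_phi_of_forall_ne {n : ℕ} (f : SymFn) {m : ℕ →₀ ℕ}
    (hm : ∀ nu : n.Partition, Multiset.toFinsupp nu.parts ≠ m) : coeff m (phi n f) = 0 := by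
  rw [phi_eq_sum_monomial, coeff_sum]
  exact Finset.sum_eq_zero fun nu _ => by rw [coeff_monomial, if_neg (hm nu)]

/-- the map `φ_n(f) = ∑_{ν ⊢ n} f(Ξ_ν) p_ν / z_ν` turns products into
Kronecker products: `φ_n(fg) = φ_n(f) ∗ φ_n(g)`. -/
theorem phi_mul_eq_kron (n : ℕ) (f g : SymFn) :
    phi n (f * g) = kron (phi n f) (phi n g) := by
  ext m
  rw [coeff_kron]
  by_cases hm : ∃ nu : n.Partition, Multiset.toFinsupp nu.parts = m
  · obtain ⟨nu, rfl⟩ := hm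
    rw [coeff_phi_toFinsupp_parts, coeff_phi_toFinsupp_parts, coeff_phi_toFinsupp_parts,
      nu.zMon_toFinsupp_parts, xiEval_mul]
    field_simp [nu.zed_ne_zero]
  · rw [not_exists] at hm
    rw [coeff_phi_of_forall_ne _ hm, coeff_phi_of_forall_ne _ hm, zero_mul, zero_mul]
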